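/- Let A be an n×n complex normal invertible matrix, let 1 ≤ m ≤ n−1, let r_{k−1} ∈ ℂⁿ, and let r_k be a nonzero GMRES(m) residual of A from r_{k−1} such that the Krylov matrix K(A, r_{k−1}) has full column rank m+1. Then K(Aᴴ, r_k)ᴴ r_{k−1} = ‖r_k‖² e₁, where K(Aᴴ, r_k) is the n×(m+1) Krylov matrix of Aᴴ and r_k, and e₁ = (1,0,…,0)ᵀ ∈ ℂ^{m+1}. -/

import Mathlib

/-!
The `j`-th entry of `K(Aᴴ, s)ᴴ r` is `⟨(Aᴴ)ʲ s, r⟩ = ⟨s, Aʲ r⟩`. Minimality of the GMRES residual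
`s = p(A) r` makes `s` orthogonal to `A r, …, Aᵐ r`, hence to `r - s = (1 - p)(A) r`, so
`⟨s, r⟩ = ‖s‖²`.
-/

open Polynomial Matrix

/-- The Euclidean (ℓ²) norm of a vector in ℂⁿ. -/
noncomputable def enorm' {n : ℕ} (v : Fin n → ℂ) : ℝ :=
  ‖(WithLp.equiv 2 (Fin n → ℂ)).symm v‖

/-- `s` is a GMRES(m) residual of `A` from `r`: there is a polynomial `p` of degree at most `m`
with `p 0 = 1` such that `s = p(A) r` and `‖s‖ ≤ ‖q(A) r‖` for all admissible `q`. -/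
def IsGMRESResidual {n : ℕ} (m : ℕ) (A : Matrix (Fin n) (Fin n) ℂ)
    (r s : Fin n → ℂ) : Prop :=
  ∃ p : ℂ[X], p.natDegree ≤ m ∧ p.eval 0 = 1 ∧ s = (aeval A p).mulVec r ∧
    ∀ q : ℂ[X], q.natDegree ≤ m → q.eval 0 = 1 →
      enorm' s ≤ enorm' ((aeval A q).mulVec r)

/-- The Krylov matrix `K(A, r) = [r, Ar, …, Aᵐ r]`, an `n × (m+1)` matrix. -/
noncomputable def krylov {n : ℕ} (m : ℕ) (A : Matrix (Fin n) (Fin n) ℂ) (r : Fin n → ℂ) :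
    Matrix (Fin n) (Fin (m + 1)) ℂ :=
  Matrix.of fun i j => (A ^ (j : ℕ)).mulVec r i

open scoped InnerProductSpace

theorem inner_eq_zero_of_forall_norm_le_norm_sub_smul {𝕜 E : Type*} [RCLike 𝕜]
    [NormedAddCommGroup E] [InnerProductSpace 𝕜 E] {x v : E}
    (h : ∀ t : 𝕜, ‖x‖ ≤ ‖x - t • v‖) : ⟪x, v⟫_𝕜 = 0 := by
  have hmin : ‖x - 0‖ = ⨅ w : 𝕜 ∙ v, ‖x - w‖ := by
    refine le_antisymm (le_ciInf fun ⟨w, hw⟩ => ?_) ?_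
    · obtain ⟨t, rfl⟩ := Submodule.mem_span_singleton.mp hw
      simpa using h t
    · exact ciInf_le ⟨0, Set.forall_mem_range.mpr fun _ => norm_nonneg _⟩ (0 : 𝕜 ∙ v)
  simpa using (Submodule.norm_eq_iInf_iff_inner_eq_zero _ (zero_mem _)).mp hmin v
    (Submodule.mem_span_singleton_self v)

theorem star_dotProduct_self_eq_enorm'_sq {n : ℕ} (v : Fin n → ℂ) :
    star v ⬝ᵥ v = (enorm' v : ℂ) ^ 2 := by
  rw [dotProduct_comm, ← EuclideanSpace.inner_toLp_toLp]
  exact inner_self_eq_norm_sq_to_K _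

namespace IsGMRESResidual

variable {n m : ℕ} {A : Matrix (Fin n) (Fin n) ℂ} {r s : Fin n → ℂ}

/-- The polynomials `p - t q` are all admissible competitors of the minimiser `p`. -/
theorem star_dotProduct_aeval_mulVec_eq_zero (hres : IsGMRESResidual m A r s) {q : ℂ[X]}
    (hq : q.natDegree ≤ m) (hq0 : q.eval 0 = 0) : star s ⬝ᵥ (aeval A q *ᵥ r) = 0 := by
  obtain ⟨p, hp, hp0, rfl, hmin⟩ := hres
  rw [dotProduct_comm, ← EuclideanSpace.inner_toLp_toLp]
  refine inner_eq_zero_of_forall_norm_le_norm_sub_smul fun t => ?_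
  have hdeg : (p - C t * q).natDegree ≤ m :=
    (natDegree_sub_le _ _).trans (max_le hp ((natDegree_C_mul_le t q).trans hq))
  have heval : (p - C t * q).eval 0 = 1 := by simp [hp0, hq0]
  have hcomp : aeval A (p - C t * q) *ᵥ r = aeval A p *ᵥ r - t • (aeval A q *ᵥ r) := by
    rw [← smul_eq_C_mul, map_sub, map_smul, sub_mulVec, smul_mulVec]
  have hle := hmin _ hdeg heval
  rw [hcomp] at hle
  simpa [enorm', WithLp.toLp_sub, WithLp.toLp_smul] using hle

theorem star_dotProduct_pow_mulVec_eq_zero (hres : IsGMRESResidual m A r s) {j : ℕ}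
    (hj0 : j ≠ 0) (hjm : j ≤ m) : star s ⬝ᵥ (A ^ j *ᵥ r) = 0 := by
  simpa using hres.star_dotProduct_aeval_mulVec_eq_zero (q := X ^ j) (by simpa using hjm)
    (by simp [hj0])

theorem star_dotProduct_eq_enorm'_sq (hres : IsGMRESResidual m A r s) :
    star s ⬝ᵥ r = (enorm' s : ℂ) ^ 2 := by
  obtain ⟨p, hp, hp0, hs, -⟩ := id hres
  have hdeg : (1 - p).natDegree ≤ m := (natDegree_sub_le _ _).trans (by simpa using hp)
  have horth := hres.star_dotProduct_aeval_mulVec_eq_zero hdeg (by simp [hp0])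
  rw [map_sub, map_one, sub_mulVec, one_mulVec, ← hs, dotProduct_sub, sub_eq_zero] at horth
  rw [horth, star_dotProduct_self_eq_enorm'_sq]

end IsGMRESResidual

theorem krylov_conjTranspose_mulVec_apply {n : ℕ} (m : ℕ) (A : Matrix (Fin n) (Fin n) ℂ)
    (s r : Fin n → ℂ) (j : Fin (m + 1)) :
    ((krylov m Aᴴ s)ᴴ *ᵥ r) j = star s ⬝ᵥ (A ^ (j : ℕ) *ᵥ r) := by
  change star (Aᴴ ^ (j : ℕ) *ᵥ s) ⬝ᵥ r = _
  rw [star_mulVec, conjTranspose_pow, conjTranspose_conjTranspose, dotProduct_mulVec]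

theorem krylov_conjTranspose_mulVec_prev_residual_general {n : ℕ} (m : ℕ)
    (A : Matrix (Fin n) (Fin n) ℂ)
    (rkm1 rk : Fin n → ℂ) (hres : IsGMRESResidual m A rkm1 rk) :
    (krylov m Aᴴ rk)ᴴ.mulVec rkm1 =
      ((enorm' rk : ℂ) ^ 2) • (Pi.single 0 1 : Fin (m + 1) → ℂ) := by
  funext j
  rw [krylov_conjTranspose_mulVec_apply]
  rcases eq_or_ne j 0 with rfl | hj
  · simpa using hres.star_dotProduct_eq_enorm'_sq
  · rw [hres.star_dotProduct_pow_mulVec_eq_zero (Fin.val_ne_zero_iff.mpr hj) (Fin.is_le j)]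
    simp [hj]

/-- For a normal invertible `A`, if `r_k` is a nonzero GMRES(m) residual of `A` from `r_{k-1}`
and the Krylov matrix `K(A, r_{k-1})` has full column rank, then
`K(Aᴴ, r_k)ᴴ r_{k-1} = ‖r_k‖² e₁`. -/
theorem krylov_conjTranspose_mulVec_prev_residual {n : ℕ} (m : ℕ) (hm : 1 ≤ m)
    (hmn : m ≤ n - 1)
    (A : Matrix (Fin n) (Fin n) ℂ) (hnormal : A * Aᴴ = Aᴴ * A) (hA : IsUnit A)
    (rkm1 rk : Fin n → ℂ) (hres : IsGMRESResidual m A rkm1 rk) (hrk : rk ≠ 0)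
    (hrank : LinearIndependent ℂ
      (fun j : Fin (m + 1) => fun i : Fin n => krylov m A rkm1 i j)) :
    (krylov m Aᴴ rk)ᴴ.mulVec rkm1 =
      ((enorm' rk : ℂ) ^ 2) • (Pi.single 0 1 : Fin (m + 1) → ℂ) :=
  krylov_conjTranspose_mulVec_prev_residual_general m A rkm1 rk hres
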